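/- Let n ≥ 3 be an integer. The constant function v ≡ ((n−2)/n)^((n−2)/4) satisfies the Delaunay ODE and H(v(t), v'(t)) = −((n−2)/2)·((n−2)/n)^(n/2) for all t ∈ ℝ; moreover, every bounded, twice continuously differentiable function v : ℝ → ℝ with v(t) > 0 for all t that satisfies the Delaunay ODE and H(v(t), v'(t)) = −((n−2)/2)·((n−2)/n)^(n/2) for all t is identically equal to ((n−2)/n)^((n−2)/4). -/

import Mathlib

/-!
With `u = v²` and `q = n/(n-2)` the energy reads `H(v, w) = w² + ((n-2)²/4)(u^q - u)`. The
strictly convex function `u ↦ u^q - u` has its only critical point at `u₀ = ((n-2)/n)^((n-2)/2)`,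
the square of the equilibrium `v₀`, and the prescribed energy is `(n-2)²/4` times its minimum
value. Hence `H(v, w)` attains that value at `v > 0` only when `v = v₀` (and `w = 0`).
-/

/-- The Delaunay ODE: `v'' − ((n−2)²/4)·v + (n·(n−2)/4)·v^((n+2)/(n−2)) = 0`. -/
def DelaunayODE (n : ℕ) (v : ℝ → ℝ) : Prop :=
  ∀ t : ℝ, deriv (deriv v) t - (((n : ℝ) - 2) ^ 2 / 4) * v t
    + ((n : ℝ) * ((n : ℝ) - 2) / 4) * v t ^ (((n : ℝ) + 2) / ((n : ℝ) - 2)) = 0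

/-- The Hamiltonian energy of the Delaunay ODE:
`H(v, w) = w² − ((n−2)²/4)·v² + ((n−2)²/4)·v^(2n/(n−2))`. -/
noncomputable def delaunayH (n : ℕ) (v w : ℝ) : ℝ :=
  w ^ 2 - (((n : ℝ) - 2) ^ 2 / 4) * v ^ 2
    + (((n : ℝ) - 2) ^ 2 / 4) * v ^ (2 * (n : ℝ) / ((n : ℝ) - 2))

open Real

theorem Real.rpow_add_mul_sub_lt_rpow {q u u₀ : ℝ} (hq : 1 < q) (hu : 0 ≤ u) (hu₀ : 0 < u₀)
    (hne : u ≠ u₀) : u₀ ^ q + q * u₀ ^ (q - 1) * (u - u₀) < u ^ q := by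
  set s := u / u₀ - 1
  have hs : 1 + s = u / u₀ := by ring
  have hs_ge : -1 ≤ s := by have := div_nonneg hu hu₀.le; linarith
  have hs_ne : s ≠ 0 := fun h ↦ hne <| by
    rw [← div_eq_one_iff_eq hu₀.ne']; linarith
  have hB := one_add_mul_self_lt_rpow_one_add hs_ge hs_ne hq
  rw [hs, div_rpow hu hu₀.le, lt_div_iff₀ (rpow_pos_of_pos hu₀ q)] at hB
  have hu_sub : u - u₀ = s * u₀ := by simp only [s]; field_simp
  calc u₀ ^ q + q * u₀ ^ (q - 1) * (u - u₀) = (1 + q * s) * u₀ ^ q := by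
        rw [hu_sub, rpow_sub_one hu₀.ne']; field_simp
    _ < u ^ q := hB

section Delaunay

variable {n : ℕ}

noncomputable def delaunayEquilibrium (n : ℕ) : ℝ := (((n : ℝ) - 2) / n) ^ (((n : ℝ) - 2) / 4)

noncomputable def delaunayGroundEnergy (n : ℕ) : ℝ :=
  -(((n : ℝ) - 2) / 2) * (((n : ℝ) - 2) / n) ^ ((n : ℝ) / 2)

theorem delaunayH_eq_of_nonneg {v : ℝ} (hv : 0 ≤ v) (w : ℝ) :
    delaunayH n v w = w ^ 2 + ((n : ℝ) - 2) ^ 2 / 4 *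
      ((v ^ 2) ^ ((n : ℝ) / ((n : ℝ) - 2)) - v ^ 2) := by
  have hpow : (v ^ 2) ^ ((n : ℝ) / ((n : ℝ) - 2)) = v ^ (2 * (n : ℝ) / ((n : ℝ) - 2)) := by
    rw [← rpow_natCast, ← rpow_mul hv]
    push_cast
    ring_nf
  rw [delaunayH, hpow]
  ring

theorem sub_two_div_pos (hn : 2 < (n : ℝ)) : 0 < ((n : ℝ) - 2) / n :=
  div_pos (by linarith) (by linarith)

theorem delaunayEquilibrium_pos (hn : 2 < (n : ℝ)) : 0 < delaunayEquilibrium n :=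
  rpow_pos_of_pos (sub_two_div_pos hn) _

theorem delaunayEquilibrium_sq (hn : 2 < (n : ℝ)) :
    delaunayEquilibrium n ^ 2 = (((n : ℝ) - 2) / n) ^ (((n : ℝ) - 2) / 2) := by
  rw [delaunayEquilibrium, ← rpow_natCast, ← rpow_mul (sub_two_div_pos hn).le]
  ring_nf

theorem delaunayEquilibrium_sq_rpow_sub_one (hn : 2 < (n : ℝ)) :
    (delaunayEquilibrium n ^ 2) ^ ((n : ℝ) / ((n : ℝ) - 2) - 1) = ((n : ℝ) - 2) / n := by
  have ha : 0 ≤ ((n : ℝ) - 2) / n := (sub_two_div_pos hn).le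
  have hexp : ((n : ℝ) - 2) / 2 * ((n : ℝ) / ((n : ℝ) - 2) - 1) = 1 := by
    field_simp [show (n : ℝ) - 2 ≠ 0 by linarith]; ring
  rw [delaunayEquilibrium_sq hn, ← rpow_mul ha, hexp, rpow_one]

theorem delaunayH_equilibrium (hn : 2 < (n : ℝ)) :
    delaunayH n (delaunayEquilibrium n) 0 = delaunayGroundEnergy n := by
  have hv₀ := delaunayEquilibrium_pos hn
  have hsq_pos : 0 < delaunayEquilibrium n ^ 2 := by positivity
  have hq : (n : ℝ) / ((n : ℝ) - 2) = (n : ℝ) / ((n : ℝ) - 2) - 1 + 1 := by ring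
  have ha := sub_two_div_pos hn
  have hpow : (((n : ℝ) - 2) / n) ^ ((n : ℝ) / 2) =
      delaunayEquilibrium n ^ 2 * (((n : ℝ) - 2) / n) := by
    rw [delaunayEquilibrium_sq hn, ← rpow_add_one ha.ne']
    ring_nf
  rw [delaunayH_eq_of_nonneg hv₀.le, hq, rpow_add_one hsq_pos.ne',
    delaunayEquilibrium_sq_rpow_sub_one hn, delaunayGroundEnergy, hpow]
  field_simp [show (n : ℝ) ≠ 0 by linarith]
  ring

theorem delaunayGroundEnergy_lt_delaunayH (hn : 2 < (n : ℝ)) {v : ℝ} (hv : 0 < v)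
    (hne : v ≠ delaunayEquilibrium n) (w : ℝ) : delaunayGroundEnergy n < delaunayH n v w := by
  have hv₀ := delaunayEquilibrium_pos hn
  have hsq_ne : v ^ 2 ≠ delaunayEquilibrium n ^ 2 := fun h ↦
    hne ((pow_left_inj₀ hv.le hv₀.le two_ne_zero).mp h)
  have hq : 1 < (n : ℝ) / ((n : ℝ) - 2) := (one_lt_div (by linarith)).mpr (by linarith)
  have hlt := rpow_add_mul_sub_lt_rpow hq (sq_nonneg v) (by positivity) hsq_ne
  have hcrit : (n : ℝ) / ((n : ℝ) - 2) * (((n : ℝ) - 2) / n) = 1 := by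
    field_simp [show (n : ℝ) - 2 ≠ 0 by linarith, show (n : ℝ) ≠ 0 by linarith]
  rw [delaunayEquilibrium_sq_rpow_sub_one hn, hcrit, one_mul] at hlt
  have hE := delaunayH_equilibrium hn
  rw [delaunayH_eq_of_nonneg hv₀.le] at hE
  rw [delaunayH_eq_of_nonneg hv.le, ← hE]
  have hc : 0 < ((n : ℝ) - 2) ^ 2 / 4 := by
    have : 0 < (n : ℝ) - 2 := by linarith
    positivity
  nlinarith [sq_nonneg w]

theorem delaunayODE_equilibrium (hn : 2 < (n : ℝ)) :
    DelaunayODE n (fun _ ↦ delaunayEquilibrium n) := by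
  intro t
  have ha := sub_two_div_pos hn
  have hpow : delaunayEquilibrium n ^ (((n : ℝ) + 2) / ((n : ℝ) - 2)) =
      delaunayEquilibrium n * (((n : ℝ) - 2) / n) := by
    rw [delaunayEquilibrium, ← rpow_mul ha.le, ← rpow_add_one ha.ne']
    congr 1
    field_simp [show (n : ℝ) - 2 ≠ 0 by linarith]
    ring
  simp only [deriv_const', hpow]
  field_simp [show (n : ℝ) ≠ 0 by linarith]
  ring

end Delaunay

theorem stmt_6 (n : ℕ) (hn : 3 ≤ n) :
    (DelaunayODE n (fun _ : ℝ => (((n : ℝ) - 2) / n) ^ (((n : ℝ) - 2) / 4)) ∧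
      ∀ t : ℝ,
        delaunayH n ((fun _ : ℝ => (((n : ℝ) - 2) / n) ^ (((n : ℝ) - 2) / 4)) t)
          (deriv (fun _ : ℝ => (((n : ℝ) - 2) / n) ^ (((n : ℝ) - 2) / 4)) t)
          = -(((n : ℝ) - 2) / 2) * (((n : ℝ) - 2) / n) ^ ((n : ℝ) / 2)) ∧
    ∀ v : ℝ → ℝ, (∃ C : ℝ, ∀ t : ℝ, |v t| ≤ C) → ContDiff ℝ 2 v →
      (∀ t : ℝ, 0 < v t) → DelaunayODE n v →
      (∀ t : ℝ, delaunayH n (v t) (deriv v t)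
        = -(((n : ℝ) - 2) / 2) * (((n : ℝ) - 2) / n) ^ ((n : ℝ) / 2)) →
      ∀ t : ℝ, v t = (((n : ℝ) - 2) / n) ^ (((n : ℝ) - 2) / 4) := by
  have hn' : 2 < (n : ℝ) := by exact_mod_cast hn
  refine ⟨⟨delaunayODE_equilibrium hn', fun t ↦ ?_⟩, fun v _ _ hpos _ hH t ↦ ?_⟩
  · simp only [deriv_const']
    exact delaunayH_equilibrium hn'
  · by_contra hne
    exact (delaunayGroundEnergy_lt_delaunayH hn' (hpos t) hne _).ne' (hH t)
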